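/- Let n ≥ 2 and let (T, J) be a primitive ℕ^n-pair, i.e., an ℕ^n-pair which is not a Cartesian product of an ℕ^p-pair and an ℕ^q-pair with p + q = n, p, q ≥ 1 (under any permutation of the coordinates). Write T ∩ ℕe₁ = A·e₁ and J ∩ ℕe₁ = B·e₁ with A, B ⊆ ℕ. Then A is finite or B is finite. -/

import Mathlib

open Pointwise

/-- Unique decompositions: every sum `a + b` with `a ∈ A`, `b ∈ B` determines `a` and `b`. -/
def UniqueSumsOn {α : Type*} [Add α] (A B : Set α) : Prop :=
  ∀ a ∈ A, ∀ b ∈ B, ∀ a' ∈ A, ∀ b' ∈ B, a + b = a' + b' → a = a' ∧ b = b'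

/-- `C = A ⊕ B`: `C` is the direct sum of `A` and `B`. -/
def IsDirectSum {α : Type*} [Add α] (A B C : Set α) : Prop :=
  C = A + B ∧ UniqueSumsOn A B


/-- `(T, J)` is (up to a permutation of coordinates) the Cartesian product of an
`ℕ^p`-pair and an `ℕ^q`-pair with `p, q ≥ 1`: there is a nonempty proper set `S`
of coordinates along which both `T` and `J` split into lower-dimensional pairs. -/
def IsProductPair {n : ℕ} (T J : Set (Fin n → ℕ)) : Prop :=
  ∃ S : Set (Fin n), S.Nonempty ∧ Sᶜ.Nonempty ∧
    ∃ (I₁ J₁ : Set (∀ _ : S, ℕ)) (I₂ J₂ : Set (∀ _ : ↥Sᶜ, ℕ)),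
      IsDirectSum I₁ J₁ Set.univ ∧ IsDirectSum I₂ J₂ Set.univ ∧
      T = {x | (fun i : S => x i.1) ∈ I₁ ∧ (fun i : ↥Sᶜ => x i.1) ∈ I₂} ∧
      J = {x | (fun i : S => x i.1) ∈ J₁ ∧ (fun i : ↥Sᶜ => x i.1) ∈ J₂}

/-!
Suppose both axis slices `A = {k | k e₀ ∈ T}` and `B = {k | k e₀ ∈ J}` are infinite. Then every
line `u + ℕ e₀` with `u₀ = 0` meets `T` in `u + A e₀` if `u ∈ T` and not at all otherwise, and
likewise for `J`; so `(T, J)` splits off the first coordinate and is not primitive.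

This goes by induction on `u`. For `u ∈ T`, the slices `C`, `D` of `T`, `J` on the line through `u`
satisfy `ℕ = (C ⊕ B) ⊔ (A ⊕ D)` with `0 ∈ C`. Let `m > 1` be the least positive element of `B` if
`1 ∈ A`, or of `A` if `1 ∈ B`. By de Bruijn's structure argument, the two sets on the side of `m`
consist of multiples of `m` and the other two are unions of blocks `[q m, q m + m)`, so dividing by
`m` gives a configuration of the same kind with `B` still infinite. Descending on an element of `D`
shows `D = ∅`, and then `C = A`.
-/

open Set Function

section DirectSum

variable {M N : Type*}

lemma UniqueSumsOn.symm [AddCommMagma M] {A B : Set M} (h : UniqueSumsOn A B) :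
    UniqueSumsOn B A := fun b hb a ha b' hb' a' ha' e =>
  (h a ha b hb a' ha' b' hb' (by rw [add_comm a, add_comm a', e])).symm

lemma UniqueSumsOn.preimage [Add M] [Add N] {X Y : Set N} (h : UniqueSumsOn X Y)
    {f g F : M → N} (hf : Injective f) (hg : Injective g) (hF : ∀ x y, f x + g y = F (x + y)) :
    UniqueSumsOn (f ⁻¹' X) (g ⁻¹' Y) := fun x hx y hy x' hx' y' hy' e =>
  have := h _ hx _ hy _ hx' _ hy' (by rw [hF, hF, e])
  ⟨hf this.1, hg this.2⟩

variable [AddCommMonoid M] [AddCommMonoid N]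

lemma IsDirectSum.symm {A B C : Set M} (h : IsDirectSum A B C) : IsDirectSum B A C :=
  ⟨h.1.trans (add_comm A B), h.2.symm⟩

lemma IsDirectSum.exists_add_eq {A B : Set M} (h : IsDirectSum A B univ) (x : M) :
    ∃ a ∈ A, ∃ b ∈ B, a + b = x :=
  mem_add.1 (h.1 ▸ mem_univ x)

lemma IsDirectSum.zero_mem_left [Subsingleton (AddUnits M)] {A B : Set M}
    (h : IsDirectSum A B univ) : 0 ∈ A := by
  obtain ⟨a, ha, b, -, hab⟩ := h.exists_add_eq 0
  rwa [(add_eq_zero.1 hab).1] at ha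

lemma IsDirectSum.zero_mem_right [Subsingleton (AddUnits M)] {A B : Set M}
    (h : IsDirectSum A B univ) : 0 ∈ B :=
  h.symm.zero_mem_left

lemma preimage_add_of_summands_mem_range (f : M →+ N) (hf : Injective f) {X Y : Set N}
    (hXY : ∀ x ∈ X, ∀ y ∈ Y, x + y ∈ range f → x ∈ range f ∧ y ∈ range f) :
    f ⁻¹' (X + Y) = f ⁻¹' X + f ⁻¹' Y := by
  refine Subset.antisymm ?_ (preimage_add_preimage_subset f)
  rintro m ⟨x, hx, y, hy, e⟩
  obtain ⟨⟨a, rfl⟩, ⟨b, rfl⟩⟩ := hXY x hx y hy ⟨m, e.symm⟩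
  exact ⟨a, hx, b, hy, hf ((map_add f a b).trans e)⟩

lemma IsDirectSum.preimage {T J : Set N} (h : IsDirectSum T J univ) (f : M →+ N)
    (hf : Injective f) (hTJ : ∀ t ∈ T, ∀ j ∈ J, t + j ∈ range f → t ∈ range f ∧ j ∈ range f) :
    IsDirectSum (f ⁻¹' T) (f ⁻¹' J) univ :=
  ⟨by rw [← preimage_add_of_summands_mem_range f hf hTJ, ← h.1, preimage_univ],
    h.2.preimage hf hf fun x y => (map_add f x y).symm⟩

/-- Two parallel rows of a pair: `A ⊕ B` is the first row and `(C ⊕ B) ⊔ (A ⊕ D)` the second.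
For `ℕ^n = T ⊕ J` and `u ∈ T`, these are the slices of `T` and `J` along `ℕ eᵢ` and `u + ℕ eᵢ`. -/
structure IsTwoRowPair (A B C D : Set M) : Prop where
  isDirectSum : IsDirectSum A B univ
  union_eq : (C + B) ∪ (A + D) = univ
  uniqueSumsOn_left : UniqueSumsOn C B
  uniqueSumsOn_right : UniqueSumsOn A D
  disjoint : Disjoint (C + B) (A + D)

namespace IsTwoRowPair

variable {A B C D : Set M}

lemma symm (h : IsTwoRowPair A B C D) : IsTwoRowPair B A D C where
  isDirectSum := h.isDirectSum.symm
  union_eq := by rw [add_comm D, add_comm B, union_comm, h.union_eq]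
  uniqueSumsOn_left := h.uniqueSumsOn_right.symm
  uniqueSumsOn_right := h.uniqueSumsOn_left.symm
  disjoint := by rw [add_comm D, add_comm B]; exact h.disjoint.symm

lemma preimage {A B C D : Set N} (h : IsTwoRowPair A B C D) (f : M →+ N) (hf : Injective f)
    (hAB : ∀ a ∈ A, ∀ b ∈ B, a + b ∈ range f → a ∈ range f ∧ b ∈ range f)
    (hCB : ∀ c ∈ C, ∀ b ∈ B, c + b ∈ range f → c ∈ range f ∧ b ∈ range f)
    (hAD : ∀ a ∈ A, ∀ d ∈ D, a + d ∈ range f → a ∈ range f ∧ d ∈ range f) :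
    IsTwoRowPair (f ⁻¹' A) (f ⁻¹' B) (f ⁻¹' C) (f ⁻¹' D) where
  isDirectSum := h.isDirectSum.preimage f hf hAB
  union_eq := by
    rw [← preimage_add_of_summands_mem_range f hf hCB,
      ← preimage_add_of_summands_mem_range f hf hAD, ← preimage_union, h.union_eq, preimage_univ]
  uniqueSumsOn_left := h.uniqueSumsOn_left.preimage hf hf fun x y => (map_add f x y).symm
  uniqueSumsOn_right := h.uniqueSumsOn_right.preimage hf hf fun x y => (map_add f x y).symm
  disjoint := by
    rw [← preimage_add_of_summands_mem_range f hf hCB,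
      ← preimage_add_of_summands_mem_range f hf hAD]
    exact h.disjoint.preimage f

lemma exists_add_eq (h : IsTwoRowPair A B C D) (x : M) :
    (∃ c ∈ C, ∃ b ∈ B, c + b = x) ∨ ∃ a ∈ A, ∃ d ∈ D, a + d = x := by
  have hx : x ∈ (C + B) ∪ (A + D) := h.union_eq ▸ mem_univ x
  simpa only [mem_union, mem_add] using hx

lemma add_ne {a b c d : M} (h : IsTwoRowPair A B C D) (hc : c ∈ C) (hb : b ∈ B) (ha : a ∈ A)
    (hd : d ∈ D) : c + b ≠ a + d := fun e =>
  disjoint_left.1 h.disjoint (add_mem_add hc hb) (e ▸ add_mem_add ha hd)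

lemma zero_notMem_right [Subsingleton (AddUnits M)] (h : IsTwoRowPair A B C D) (hC : 0 ∈ C) :
    0 ∉ D := fun hD =>
  h.add_ne hC h.isDirectSum.zero_mem_right h.isDirectSum.zero_mem_left hD rfl

end IsTwoRowPair

end DirectSum

section Nat

/-- `X` is a union of blocks `[q m, q m + m)`. -/
def IsBlockUnion (m : ℕ) (X : Set ℕ) : Prop := ∀ k, k ∈ X ↔ k - k % m ∈ X

lemma IsBlockUnion.mul_div_mem {m x : ℕ} {X : Set ℕ} (h : IsBlockUnion m X) (hx : x ∈ X) :
    m * (x / m) ∈ X := by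
  have := Nat.div_add_mod x m
  rw [show m * (x / m) = x - x % m by omega]
  exact (h x).1 hx

lemma Nat.sub_mod_of_dvd {m b k : ℕ} (hb : m ∣ b) (hbk : b ≤ k) : (k - b) % m = k % m := by
  obtain ⟨t, rfl⟩ := hb
  exact Nat.sub_mul_mod hbk

variable {A B C D : Set ℕ} {m : ℕ}

lemma IsDirectSum.mem_left_of_lt (h : IsDirectSum A B univ) (hm : IsLeast {b ∈ B | 0 < b} m)
    {k : ℕ} (hk : k < m) : k ∈ A := by
  obtain ⟨a, ha, b, hb, rfl⟩ := h.exists_add_eq k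
  obtain rfl | hb0 := Nat.eq_zero_or_pos b
  · simpa using ha
  · exact absurd (hm.2 ⟨hb, hb0⟩) (by omega)

lemma IsDirectSum.one_lt_of_isLeast (h : IsDirectSum A B univ) (h1 : 1 ∈ A)
    (hm : IsLeast {b ∈ B | 0 < b} m) : 1 < m := by
  by_contra! hle
  obtain rfl : m = 1 := by have := hm.1.2; omega
  have := h.2 1 h1 0 h.zero_mem_right 0 h.zero_mem_left 1 hm.1.1 rfl
  omega

theorem IsDirectSum.dvd_and_isBlockUnion (h : IsDirectSum A B univ)
    (hm : IsLeast {b ∈ B | 0 < b} m) : (∀ b ∈ B, m ∣ b) ∧ IsBlockUnion m A := by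
  have hu := h.2
  suffices H : ∀ k, (k ∈ B → m ∣ k) ∧ (k ∈ A ↔ k - k % m ∈ A) from
    ⟨fun b hb => (H b).1 hb, fun k => (H k).2⟩
  intro k
  induction k using Nat.strong_induction_on with | _ k IH =>
  obtain hr0 | hr0 := Nat.eq_zero_or_pos (k % m)
  · exact ⟨fun _ => Nat.dvd_of_mod_eq_zero hr0, by rw [hr0, Nat.sub_zero]⟩
  have hrm : k % m < m := Nat.mod_lt k hm.1.2
  have hrk : k % m ≤ k := Nat.mod_le k m
  generalize hr : k % m = r at hr0 hrm hrk ⊢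
  -- in `k - r = a + b` with `b > 0`, `b` is a multiple of `m`, so `a + r ∈ A` and `k = (a + r) + b`
  have hkB : k ∉ B ∧ (k ∈ A → k - r ∈ A) := by
    obtain ⟨a, ha, b, hb, e⟩ := h.exists_add_eq (k - r)
    obtain rfl | hb0 := Nat.eq_zero_or_pos b
    · refine ⟨fun hkB => ?_, fun _ => by rwa [← e, add_zero]⟩
      have := hu _ ha _ hm.1.1 _ (h.mem_left_of_lt hm (show m - r < m by omega)) _ hkB
        (by omega)
      rw [← this.2, Nat.mod_self] at hr
      omega
    have hmod : (a + r) % m = r := by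
      rw [show a + r = k - b by omega, Nat.sub_mod_of_dvd ((IH b (by omega)).1 hb) (by omega), hr]
    have har : a + r ∈ A := (IH _ (by omega)).2.2 (by rwa [hmod, Nat.add_sub_cancel])
    refine ⟨fun hkB => ?_, fun hkA => ?_⟩
    · have := hu _ har _ hb _ h.zero_mem_left _ hkB (by omega)
      omega
    · have := hu _ har _ hb _ hkA _ h.zero_mem_right (by omega)
      omega
  refine ⟨fun hk => (hkB.1 hk).elim, hkB.2, fun hkA => ?_⟩
  obtain ⟨a, ha, b, hb, e⟩ := h.exists_add_eq k
  obtain rfl | hb0 := Nat.eq_zero_or_pos b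
  · rwa [← e, add_zero]
  have hbk : b < k := lt_of_le_of_ne (by omega) fun hbk => hkB.1 (hbk ▸ hb)
  have hmod : a % m = r := by
    rw [show a = k - b by omega, Nat.sub_mod_of_dvd ((IH b hbk).1 hb) (by omega), hr]
  have haA := (IH a (by omega)).2.1 ha
  have hra : r ≤ a := hmod ▸ Nat.mod_le a m
  rw [hmod] at haA
  have := hu _ haA _ hb _ hkA _ h.zero_mem_right (by omega)
  omega

theorem IsTwoRowPair.dvd_and_isBlockUnion (h : IsTwoRowPair A B C D)
    (hm : IsLeast {b ∈ B | 0 < b} m) : (∀ d ∈ D, m ∣ d) ∧ IsBlockUnion m C := by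
  obtain ⟨hBm, hA⟩ := h.isDirectSum.dvd_and_isBlockUnion hm
  have h0A := h.isDirectSum.zero_mem_left
  have h0B := h.isDirectSum.zero_mem_right
  suffices H : ∀ k, (k ∈ D → m ∣ k) ∧ (k ∈ C ↔ k - k % m ∈ C) from
    ⟨fun d hd => (H d).1 hd, fun k => (H k).2⟩
  intro k
  induction k using Nat.strong_induction_on with | _ k IH =>
  obtain hr0 | hr0 := Nat.eq_zero_or_pos (k % m)
  · exact ⟨fun _ => Nat.dvd_of_mod_eq_zero hr0, by rw [hr0, Nat.sub_zero]⟩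
  have hrm : k % m < m := Nat.mod_lt k hm.1.2
  have hrk : k % m ≤ k := Nat.mod_le k m
  generalize hr : k % m = r at hr0 hrm hrk ⊢
  have hkD : k ∉ D ∧ (k ∈ C → k - r ∈ C) := by
    rcases h.exists_add_eq (k - r) with ⟨c, hc, b, hb, e⟩ | ⟨a, ha, d, hd, e⟩
    · obtain rfl | hb0 := Nat.eq_zero_or_pos b
      · refine ⟨fun hkD => ?_, fun _ => by rwa [← e, add_zero]⟩
        exact h.add_ne hc hm.1.1 (h.isDirectSum.mem_left_of_lt hm (show m - r < m by omega)) hkD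
          (by omega)
      have hmod : (c + r) % m = r := by
        rw [show c + r = k - b by omega, Nat.sub_mod_of_dvd (hBm b hb) (by omega), hr]
      have hcr : c + r ∈ C := (IH _ (by omega)).2.2 (by rwa [hmod, Nat.add_sub_cancel])
      refine ⟨fun hkD => h.add_ne hcr hb h0A hkD (by omega), fun hkC => ?_⟩
      have := h.uniqueSumsOn_left _ hcr _ hb _ hkC _ h0B (by omega)
      omega
    · have hmod : (a + r) % m = r := by
        rw [show a + r = k - d by omega, Nat.sub_mod_of_dvd ((IH d (by omega)).1 hd) (by omega),
          hr]
      have har : a + r ∈ A := (hA _).2 (by rwa [hmod, Nat.add_sub_cancel])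
      refine ⟨fun hkD => ?_, fun hkC => (h.add_ne hkC h0B har hd (by omega)).elim⟩
      have := h.uniqueSumsOn_right _ har _ hd _ h0A _ hkD (by omega)
      omega
  refine ⟨fun hk => (hkD.1 hk).elim, hkD.2, fun hkC => ?_⟩
  rcases h.exists_add_eq k with ⟨c, hc, b, hb, e⟩ | ⟨a, ha, d, hd, e⟩
  · obtain rfl | hb0 := Nat.eq_zero_or_pos b
    · rwa [← e, add_zero]
    have hmod : c % m = r := by
      rw [show c = k - b by omega, Nat.sub_mod_of_dvd (hBm b hb) (by omega), hr]
    have hcC := (IH c (by omega)).2.1 hc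
    have hrc : r ≤ c := hmod ▸ Nat.mod_le c m
    rw [hmod] at hcC
    have := h.uniqueSumsOn_left _ hcC _ hb _ hkC _ h0B (by omega)
    omega
  · have hdk : d < k := lt_of_le_of_ne (by omega) fun hdk => hkD.1 (hdk ▸ hd)
    have hmod : a % m = r := by
      rw [show a = k - d by omega, Nat.sub_mod_of_dvd ((IH d hdk).1 hd) (by omega), hr]
    have haA := (hA a).1 ha
    have hra : r ≤ a := hmod ▸ Nat.mod_le a m
    rw [hmod] at haA
    exact (h.add_ne hkC h0B haA hd (by omega)).elim

lemma IsTwoRowPair.preimage_mul (h : IsTwoRowPair A B C D) (hm : 0 < m)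
    (hdvd : ((∀ b ∈ B, m ∣ b) ∧ ∀ d ∈ D, m ∣ d) ∨ ((∀ a ∈ A, m ∣ a) ∧ ∀ c ∈ C, m ∣ c)) :
    IsTwoRowPair ((m * ·) ⁻¹' A) ((m * ·) ⁻¹' B) ((m * ·) ⁻¹' C) ((m * ·) ⁻¹' D) := by
  have mem_range {x : ℕ} (hx : m ∣ x) : x ∈ range (AddMonoidHom.mulLeft m) :=
    ⟨x / m, Nat.mul_div_cancel' hx⟩
  have split {X Y : Set ℕ} (hXY : (∀ y ∈ Y, m ∣ y) ∨ ∀ x ∈ X, m ∣ x) :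
      ∀ x ∈ X, ∀ y ∈ Y, x + y ∈ range (AddMonoidHom.mulLeft m) →
        x ∈ range (AddMonoidHom.mulLeft m) ∧ y ∈ range (AddMonoidHom.mulLeft m) := by
    rintro x hx y hy ⟨t, ht⟩
    have hxy : m ∣ x + y := ⟨t, ht.symm⟩
    rcases hXY with hY | hX
    · exact ⟨mem_range ((Nat.dvd_add_left (hY y hy)).1 hxy), mem_range (hY y hy)⟩
    · exact ⟨mem_range (hX x hx), mem_range ((Nat.dvd_add_right (hX x hx)).1 hxy)⟩
  have hf := mul_right_injective₀ hm.ne'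
  rcases hdvd with ⟨hB, hD⟩ | ⟨hA, hC⟩
  · exact h.preimage _ hf (split (.inl hB)) (split (.inl hB)) (split (.inl hD))
  · exact h.preimage _ hf (split (.inr hA)) (split (.inr hC)) (split (.inr hA))

lemma infinite_preimage_mul (hB : B.Infinite) (hm : 0 < m) (hBm : ∀ b ∈ B, m * (b / m) ∈ B) :
    ((m * ·) ⁻¹' B).Infinite :=
  infinite_of_forall_exists_gt fun N => by
    obtain ⟨b, hb, hNb⟩ := hB.exists_gt ((N + 1) * m)
    exact ⟨b / m, hBm b hb, (Nat.le_div_iff_mul_le hm).2 hNb.le⟩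

lemma IsTwoRowPair.exists_descent (h : IsTwoRowPair A B C D) (hB : B.Infinite) (hC : 0 ∈ C)
    (hD : D.Nonempty) : ∃ m, 1 < m ∧
      (((∀ b ∈ B, m ∣ b) ∧ ∀ d ∈ D, m ∣ d) ∨ ((∀ a ∈ A, m ∣ a) ∧ ∀ c ∈ C, m ∣ c)) ∧
      (∀ b ∈ B, m * (b / m) ∈ B) ∧ ∀ d ∈ D, m * (d / m) ∈ D := by
  obtain ⟨a, ha, b, hb, hab⟩ := h.isDirectSum.exists_add_eq 1
  obtain ⟨rfl, -⟩ | ⟨-, rfl⟩ : a = 1 ∧ b = 0 ∨ a = 0 ∧ b = 1 := by omega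
  · obtain ⟨b, hb, hb0⟩ := hB.exists_gt 0
    have hm := isLeast_csInf (s := {b ∈ B | 0 < b}) ⟨b, hb, hb0⟩
    have hBm := (h.isDirectSum.dvd_and_isBlockUnion hm).1
    have hDm := (h.dvd_and_isBlockUnion hm).1
    exact ⟨_, h.isDirectSum.one_lt_of_isLeast ha hm, .inl ⟨hBm, hDm⟩,
      fun b hb => by rwa [Nat.mul_div_cancel' (hBm b hb)],
      fun d hd => by rwa [Nat.mul_div_cancel' (hDm d hd)]⟩
  by_cases hA : ∃ a ∈ A, 0 < a
  · have hm := isLeast_csInf (s := {a ∈ A | 0 < a}) hA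
    obtain ⟨hAm, hBm⟩ := h.isDirectSum.symm.dvd_and_isBlockUnion hm
    obtain ⟨hCm, hDm⟩ := h.symm.dvd_and_isBlockUnion hm
    exact ⟨_, h.isDirectSum.symm.one_lt_of_isLeast hb hm, .inr ⟨hAm, hCm⟩,
      fun b hb => hBm.mul_div_mem hb, fun d hd => hDm.mul_div_mem hd⟩
  -- `A = {0}`, hence `B = ℕ`
  obtain ⟨d, hd⟩ := hD
  obtain ⟨a, ha, b, hb, e⟩ := h.isDirectSum.exists_add_eq d
  obtain rfl : a = 0 := Nat.eq_zero_of_not_pos fun ha0 => hA ⟨a, ha, ha0⟩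
  exact (h.add_ne hC hb h.isDirectSum.zero_mem_left hd (by omega)).elim

theorem IsTwoRowPair.eq_empty_right (h : IsTwoRowPair A B C D) (hB : B.Infinite) (hC : 0 ∈ C) :
    D = ∅ := by
  suffices H : ∀ d, ∀ {A B C D : Set ℕ}, IsTwoRowPair A B C D → B.Infinite → 0 ∈ C → d ∉ D from
    eq_empty_iff_forall_notMem.2 fun d => H d h hB hC
  intro d
  induction d using Nat.strong_induction_on with | _ d IH =>
  intro A B C D h hB hC hd
  have hd0 : 0 < d := Nat.pos_of_ne_zero fun h0 => h.zero_notMem_right hC (h0 ▸ hd)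
  obtain ⟨m, hm, hdvd, hBm, hDm⟩ := h.exists_descent hB hC ⟨d, hd⟩
  exact IH (d / m) (Nat.div_lt_self hd0 hm) (h.preimage_mul (by omega) hdvd)
    (infinite_preimage_mul hB (by omega) hBm) (by simpa using hC) (hDm d hd)

lemma IsDirectSum.eq_left {A A' : Set ℕ} (h : IsDirectSum A B univ) (h' : IsDirectSum A' B univ) :
    A = A' := by
  have step {X Y : Set ℕ} (hX : IsDirectSum X B univ) (hY : IsDirectSum Y B univ) (k : ℕ)
      (IH : ∀ j < k, j ∈ X ↔ j ∈ Y) (hk : k ∈ X) : k ∈ Y := by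
    obtain ⟨y, hy, b, hb, rfl⟩ := hY.exists_add_eq k
    obtain rfl | hb0 := Nat.eq_zero_or_pos b
    · simpa using hy
    · have := hX.2 _ ((IH y (by omega)).2 hy) _ hb _ hk _ hX.zero_mem_right (add_zero _).symm
      omega
  ext k
  induction k using Nat.strong_induction_on with | _ k IH =>
  exact ⟨step h h' k IH, step h' h k fun j hj => (IH j hj).symm⟩

theorem IsTwoRowPair.eq_left (h : IsTwoRowPair A B C D) (hB : B.Infinite) (hC : 0 ∈ C) :
    C = A :=
  IsDirectSum.eq_left
    ⟨by simpa [h.eq_empty_right hB hC] using h.union_eq.symm, h.uniqueSumsOn_left⟩ h.isDirectSum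

end Nat

section Lattice

variable {ι : Type*} [DecidableEq ι] (i : ι)

lemma update_zero_add_single (x : ι → ℕ) : update x i 0 + Pi.single i (x i) = x := by
  ext l
  by_cases hl : l = i
  · subst hl; simp
  · simp [hl]

lemma eq_single_of_add_eq_single {x y : ι → ℕ} {k : ℕ} (h : x + y = Pi.single i k) :
    x = Pi.single i (x i) := by
  ext l
  by_cases hl : l = i
  · subst hl; simp
  · have := congrFun h l
    simp only [Pi.add_apply, Pi.single_eq_of_ne hl] at this
    simp [hl, (add_eq_zero.1 this).1]

def SplitsAt (T : Set (ι → ℕ)) (u : ι → ℕ) : Prop :=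
  ∀ k, u + Pi.single i k ∈ T ↔ Pi.single i k ∈ T ∧ u ∈ T

variable {T J : Set (ι → ℕ)} {u : ι → ℕ}

lemma IsDirectSum.isDirectSum_slice (h : IsDirectSum T J univ) :
    IsDirectSum {k : ℕ | Pi.single i k ∈ T} {k : ℕ | Pi.single i k ∈ J} univ :=
  h.preimage (AddMonoidHom.single _ i) (Pi.single_injective (M := fun _ => ℕ) i)
    fun t _ j _ ⟨_, hk⟩ =>
    ⟨⟨t i, (eq_single_of_add_eq_single i hk.symm).symm⟩,
      ⟨j i, (eq_single_of_add_eq_single i ((add_comm j t).trans hk.symm)).symm⟩⟩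

lemma IsDirectSum.eq_or_eq_of_add_eq (h : IsDirectSum T J univ) (hu : u i = 0) (huT : u ∈ T)
    (IH : ∀ v < u, v i = 0 → SplitsAt i T v ∧ SplitsAt i J v) {t j : ι → ℕ} {k : ℕ}
    (ht : t ∈ T) (hj : j ∈ J) (e : t + j = u + Pi.single i k) :
    (t = u + Pi.single i (t i) ∧ j = Pi.single i (j i)) ∨
      (t = Pi.single i (t i) ∧ j = u + Pi.single i (j i)) := by
  have ht' := update_zero_add_single i t
  have hj' := update_zero_add_single i j
  have hsum : update t i 0 + update j i 0 = u := by
    ext l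
    have := congrFun e l
    by_cases hl : l = i
    · subst hl; simp [hu]
    · simpa [hl] using this
  by_cases htu : update t i 0 = u
  · have hj0 : update j i 0 = 0 := by rw [htu] at hsum; exact add_eq_left.1 hsum
    rw [htu] at ht'
    rw [hj0, zero_add] at hj'
    exact .inl ⟨ht'.symm, hj'.symm⟩
  by_cases hju : update j i 0 = u
  · have ht0 : update t i 0 = 0 := by rw [hju] at hsum; exact add_eq_right.1 hsum
    rw [ht0, zero_add] at ht'
    rw [hju] at hj'
    exact .inr ⟨ht'.symm, hj'.symm⟩
  -- otherwise both off-axis parts are proper parts of `u`, giving a second decomposition of `u + 0`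
  exfalso
  have htT := ((IH _ (lt_of_le_of_ne (hsum ▸ le_self_add) htu) (by simp)).1 (t i)).1
    (by rwa [ht'])
  have hjJ := ((IH _ (lt_of_le_of_ne (hsum ▸ le_add_self) hju) (by simp)).2 (j i)).1
    (by rwa [hj'])
  exact htu (h.2 _ htT.2 _ hjJ.2 _ huT _ h.zero_mem_right (by rw [hsum, add_zero])).1

lemma IsDirectSum.isTwoRowPair (h : IsDirectSum T J univ) (hu : u i = 0) (hu0 : u ≠ 0)
    (huT : u ∈ T) (IH : ∀ v < u, v i = 0 → SplitsAt i T v ∧ SplitsAt i J v) :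
    IsTwoRowPair {k : ℕ | Pi.single i k ∈ T} {k : ℕ | Pi.single i k ∈ J}
      {k | u + Pi.single i k ∈ T} {k | u + Pi.single i k ∈ J} where
  isDirectSum := h.isDirectSum_slice i
  union_eq := eq_univ_of_forall fun k => by
    obtain ⟨t, ht, j, hj, e⟩ := h.exists_add_eq (u + Pi.single i k)
    have hk : t i + j i = k := by simpa [hu] using congrFun e i
    rcases h.eq_or_eq_of_add_eq i hu huT IH ht hj e with ⟨htu, hju⟩ | ⟨htu, hju⟩
    · exact .inl ⟨t i, show _ ∈ T from htu ▸ ht, j i, show _ ∈ J from hju ▸ hj, hk⟩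
    · exact .inr ⟨t i, show _ ∈ T from htu ▸ ht, j i, show _ ∈ J from hju ▸ hj, hk⟩
  uniqueSumsOn_left := h.2.preimage (F := (u + Pi.single i ·))
    ((add_right_injective u).comp (Pi.single_injective i)) (Pi.single_injective i) fun x y => by
      rw [Pi.single_add, add_assoc]
  uniqueSumsOn_right := h.2.preimage (F := (u + Pi.single i ·)) (Pi.single_injective i)
    ((add_right_injective u).comp (Pi.single_injective i)) fun x y => by
      rw [Pi.single_add, add_left_comm]
  disjoint := by
    rw [disjoint_left]
    rintro _ ⟨c, hc, b, hb, rfl⟩ ⟨a, ha, d, hd, e⟩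
    have := (h.2 _ ha _ hd _ hc _ hb (by
      rw [add_left_comm, ← Pi.single_add, show a + d = c + b from e, Pi.single_add, add_assoc])).1
    refine hu0 (funext fun l => ?_)
    by_cases hl : l = i
    · exact hl ▸ hu
    · simpa [hl] using (congrFun this l).symm

lemma IsDirectSum.splitsAt_of_mem (h : IsDirectSum T J univ)
    (hJ : {k : ℕ | Pi.single i k ∈ J}.Infinite) (hu : u i = 0) (hu0 : u ≠ 0) (huT : u ∈ T)
    (IH : ∀ v < u, v i = 0 → SplitsAt i T v ∧ SplitsAt i J v) :
    SplitsAt i T u ∧ SplitsAt i J u := by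
  have hp := h.isTwoRowPair i hu hu0 huT IH
  have hC : 0 ∈ {k | u + Pi.single i k ∈ T} := by simpa using huT
  have hD := hp.eq_empty_right hJ hC
  have hCA := hp.eq_left hJ hC
  have huJ : u ∉ J := fun huJ =>
    hu0 (h.2 _ huT _ h.zero_mem_right _ h.zero_mem_left _ huJ (by rw [add_zero, zero_add])).1
  refine ⟨fun k => ?_, fun k => ?_⟩
  · rw [and_iff_left huT]
    exact Set.ext_iff.1 hCA k
  · exact ⟨fun hk => (eq_empty_iff_forall_notMem.1 hD k hk).elim, fun hk => (huJ hk.2).elim⟩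

lemma IsDirectSum.splitsAt_of_add_eq (h : IsDirectSum T J univ) {p q : ι → ℕ} (hp : p ∈ T)
    (hq : q ∈ J) (hpq : p + q = u) (hpu : p ≠ u) (hqu : q ≠ u) (hsp : SplitsAt i T p)
    (hsq : SplitsAt i J q) : SplitsAt i T u ∧ SplitsAt i J u := by
  have hnot : ∀ k, u + Pi.single i k ∉ T ∧ u + Pi.single i k ∉ J := by
    intro k
    obtain ⟨a, ha, b, hb, rfl⟩ := (h.isDirectSum_slice i).exists_add_eq k
    have hpa : p + Pi.single i a ∈ T := (hsp a).2 ⟨ha, hp⟩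
    have hqb : q + Pi.single i b ∈ J := (hsq b).2 ⟨hb, hq⟩
    have e : p + Pi.single i a + (q + Pi.single i b) = u + Pi.single i (a + b) := by
      rw [← hpq, Pi.single_add, add_add_add_comm]
    refine ⟨fun hT => hpu ?_, fun hJ => hqu ?_⟩
    · have := (h.2 _ hT _ h.zero_mem_right _ hpa _ hqb (by rw [add_zero, e])).2
      rw [← hpq, (add_eq_zero.1 this.symm).1, add_zero]
    · have := (h.2 _ h.zero_mem_left _ hJ _ hpa _ hqb (by rw [zero_add, e])).1
      rw [← hpq, (add_eq_zero.1 this.symm).1, zero_add]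
  refine ⟨fun k => ⟨fun hk => ((hnot k).1 hk).elim, fun hk => (hnot 0).1 ?_ |>.elim⟩,
    fun k => ⟨fun hk => ((hnot k).2 hk).elim, fun hk => (hnot 0).2 ?_ |>.elim⟩⟩
  · simpa using hk.2
  · simpa using hk.2

theorem IsDirectSum.splitsAt [Finite ι] (h : IsDirectSum T J univ)
    (hT : {k : ℕ | Pi.single i k ∈ T}.Infinite) (hJ : {k : ℕ | Pi.single i k ∈ J}.Infinite)
    (u : ι → ℕ) (hu : u i = 0) : SplitsAt i T u ∧ SplitsAt i J u := by
  induction u using WellFoundedLT.induction with | _ u IH =>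
  obtain rfl | hu0 := eq_or_ne u 0
  · simp [SplitsAt, h.zero_mem_left, h.zero_mem_right]
  obtain ⟨p, hp, q, hq, hpq⟩ := h.exists_add_eq u
  by_cases hpu : p = u
  · exact h.splitsAt_of_mem i hJ hu hu0 (hpu ▸ hp) IH
  by_cases hqu : q = u
  · exact (h.symm.splitsAt_of_mem i hT hu hu0 (hqu ▸ hq) fun v hv hvi => (IH v hv hvi).symm).symm
  have hpqi : p i = 0 ∧ q i = 0 := add_eq_zero.1 (by simpa [hu] using congrFun hpq i)
  exact h.splitsAt_of_add_eq i hp hq hpq hpu hqu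
    (IH p (lt_of_le_of_ne (hpq ▸ le_self_add) hpu) hpqi.1).1
    (IH q (lt_of_le_of_ne (hpq ▸ le_add_self) hqu) hpqi.2).2

end Lattice

section Product

variable {ι : Type*}

lemma extend_val_eq_indicator (S : Set ι) (x : ι → ℕ) :
    extend Subtype.val (fun i : S => x i) 0 = S.indicator x := by
  ext l
  by_cases hl : l ∈ S
  · rw [extend_val_apply hl, indicator_of_mem hl]
  · rw [extend_val_apply' hl, indicator_of_notMem hl, Pi.zero_apply]

lemma mem_range_extendByZero {S : Set ι} {x : ι → ℕ} (hx : ∀ l ∉ S, x l = 0) :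
    x ∈ range (ExtendByZero.hom ℕ (Subtype.val : S → ι)) :=
  ⟨fun l => x l, (extend_val_eq_indicator S x).trans
    (indicator_eq_self.2 fun l hl => by_contra fun hlS => hl (hx l hlS))⟩

lemma mem_iff_indicator_mem [DecidableEq ι] {T : Set (ι → ℕ)} {i : ι}
    (hT : ∀ u, u i = 0 → SplitsAt i T u) (x : ι → ℕ) :
    x ∈ T ↔ ({i} : Set ι).indicator x ∈ T ∧ ({i}ᶜ : Set ι).indicator x ∈ T := by
  have hsingle : ({i} : Set ι).indicator x = Pi.single i (x i) := by
    ext l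
    by_cases hl : l = i
    · subst hl; simp
    · simp [hl]
  rw [hsingle, ← hT _ (indicator_of_notMem (by simp) x), ← hsingle, indicator_compl_add_self]

lemma IsDirectSum.isProductPair {n : ℕ} {T J : Set (Fin n → ℕ)} (h : IsDirectSum T J univ)
    {S : Set (Fin n)} (hS : S.Nonempty) (hSc : Sᶜ.Nonempty)
    (hT : ∀ x, x ∈ T ↔ S.indicator x ∈ T ∧ Sᶜ.indicator x ∈ T)
    (hJ : ∀ x, x ∈ J ↔ S.indicator x ∈ J ∧ Sᶜ.indicator x ∈ J) : IsProductPair T J := by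
  have hsplit (R : Set (Fin n)) :
      IsDirectSum (ExtendByZero.hom ℕ (Subtype.val : R → Fin n) ⁻¹' T)
        (ExtendByZero.hom ℕ (Subtype.val : R → Fin n) ⁻¹' J) univ := by
    refine h.preimage _ (extend_injective Subtype.val_injective (0 : Fin n → ℕ)) ?_
    rintro t - j - ⟨f, hf⟩
    have hzero (l) (hl : l ∉ R) : t l + j l = 0 := by
      rw [← Pi.add_apply, ← hf, ExtendByZero.hom_apply, extend_val_apply' hl, Pi.zero_apply]
    exact ⟨mem_range_extendByZero fun l hl => (add_eq_zero.1 (hzero l hl)).1,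
      mem_range_extendByZero fun l hl => (add_eq_zero.1 (hzero l hl)).2⟩
  refine ⟨S, hS, hSc, _, _, _, _, hsplit S, hsplit Sᶜ, Set.ext fun x => ?_, Set.ext fun x => ?_⟩
  · change x ∈ T ↔ extend Subtype.val (fun i : S => x i) 0 ∈ T ∧
      extend Subtype.val (fun i : ↥Sᶜ => x i) 0 ∈ T
    rw [extend_val_eq_indicator, extend_val_eq_indicator, hT]
  · change x ∈ J ↔ extend Subtype.val (fun i : S => x i) 0 ∈ J ∧
      extend Subtype.val (fun i : ↥Sᶜ => x i) 0 ∈ J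
    rw [extend_val_eq_indicator, extend_val_eq_indicator, hJ]

end Product

theorem stmt17 {n : ℕ} (hn : 2 ≤ n) (T J : Set (Fin n → ℕ))
    (h : IsDirectSum T J Set.univ) (hprim : ¬ IsProductPair T J) :
    {k : ℕ | Pi.single (⟨0, by omega⟩ : Fin n) k ∈ T}.Finite ∨
    {k : ℕ | Pi.single (⟨0, by omega⟩ : Fin n) k ∈ J}.Finite := by
  by_contra hfin
  obtain ⟨hT, hJ⟩ := not_or.1 hfin
  have hsplit := h.splitsAt _ hT hJ
  exact hprim <| h.isProductPair (singleton_nonempty _)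
    ⟨⟨1, by omega⟩, by simp [Fin.ext_iff]⟩
    (mem_iff_indicator_mem fun u hu => (hsplit u hu).1)
    (mem_iff_indicator_mem fun u hu => (hsplit u hu).2)
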